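/- Let f be an entropy generator and γ ∈ ℝ, and suppose that for all probability distributions P, Q on ℕ one has ∑_{i,j} f(p_i·q_j) = ∑_i f(p_i) + ∑_j f(q_j) + γ·(∑_i f(p_i))·(∑_j f(q_j)). Then for all rational numbers q, r ∈ [0,1]: f(q·r) = q·f(r) + r·f(q) + γ·f(q)·f(r). -/

import Mathlib

/-- A probability distribution on ℕ: nonnegative weights summing to 1. -/
def IsProbDist (p : ℕ → ℝ) : Prop := (∀ i, 0 ≤ p i) ∧ HasSum p 1

/-- An entropy generator: real analytic on `[0,∞)`, strictly convex on `[0,∞)`,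
with `f 0 = f 1 = 0` and `f' 1 = 1`. -/
def IsEntropyGenerator (f : ℝ → ℝ) : Prop :=
  (∀ x ∈ Set.Ici (0 : ℝ), AnalyticAt ℝ f x) ∧
  StrictConvexOn ℝ (Set.Ici (0 : ℝ)) f ∧
  f 0 = 0 ∧ f 1 = 0 ∧ deriv f 1 = 1

/-!
Fix `N > 0` and test the product rule against the uniform distribution on `N` points: the
defect `x ↦ f (x / N) - (x f (1 / N) + f x / N + γ f x f (1 / N))` sums to zero over every
finitely supported distribution, hence is additive on `[0, 1]` and vanishes at `1`, so it
vanishes at every rational point of `[0, 1]`.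

Writing `Φ x = x + ε f x` in `ℝ[ε] / (ε² - γ ε)`, this says `Φ (x / N) = Φ x * Φ (1 / N)`, and the
claim is `Φ (q r) = Φ q * Φ r`. For `q = a / n` and `r = b / m`, both `Φ (q r) * Φ (1 / a) * Φ (1 / b)`
and `Φ q * Φ r * Φ (1 / a) * Φ (1 / b)` equal `Φ (1 / (n m))`. The factor `Φ (1 / a)` cancels because
`1 / a + γ f (1 / a) ≠ 0`: otherwise `f (1 / (2 a)) = f (1 / a) / 2`, against strict convexity.
-/

open Finset

def finDist {n : ℕ} (v : Fin n → ℝ) (i : ℕ) : ℝ := if h : i < n then v ⟨i, h⟩ else 0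

lemma finDist_of_le {n : ℕ} (v : Fin n → ℝ) {i : ℕ} (hi : n ≤ i) : finDist v i = 0 :=
  dif_neg hi.not_gt

lemma sum_range_finDist {M : Type*} [AddCommMonoid M] {n : ℕ} (v : Fin n → ℝ) (g : ℝ → M) :
    ∑ i ∈ range n, g (finDist v i) = ∑ i, g (v i) := by
  rw [sum_range]
  simp [finDist]

lemma isProbDist_finDist {n : ℕ} {v : Fin n → ℝ} (hv : ∀ i, 0 ≤ v i) (hv1 : ∑ i, v i = 1) :
    IsProbDist (finDist v) := by
  refine ⟨fun i => ?_, ?_⟩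
  · unfold finDist; split_ifs <;> simp [hv]
  · have := hasSum_sum_of_ne_finset_zero (L := SummationFilter.unconditional ℕ) (s := range n)
      (f := finDist v) fun i hi => finDist_of_le v (by simpa using hi)
    rwa [sum_range_finDist v (fun x => x), hv1] at this

lemma tsum_comp_finDist {g : ℝ → ℝ} (hg : g 0 = 0) {n : ℕ} (v : Fin n → ℝ) :
    ∑' i, g (finDist v i) = ∑ i, g (v i) := by
  rw [tsum_eq_sum (s := range n) fun i hi => by rw [finDist_of_le v (by simpa using hi), hg]]
  exact sum_range_finDist v g

lemma tsum_comp_finDist_mul {g : ℝ → ℝ} (hg : g 0 = 0) {n m : ℕ} (v : Fin n → ℝ)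
    (w : Fin m → ℝ) :
    ∑' ij : ℕ × ℕ, g (finDist v ij.1 * finDist w ij.2) = ∑ i, ∑ j, g (v i * w j) := by
  rw [tsum_eq_sum (s := range n ×ˢ range m) fun ij hij => ?_, sum_product]
  · rw [sum_range_finDist v fun x => ∑ j ∈ range m, g (x * finDist w j)]
    exact sum_congr rfl fun i _ => sum_range_finDist w fun y => g (v i * y)
  · rcases not_and_or.mp (mem_product.not.mp hij) with hi | hj
    · rw [finDist_of_le v (by simpa using hi), zero_mul, hg]
    · rw [finDist_of_le w (by simpa using hj), mul_zero, hg]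

lemma eq_zero_natCast_div_of_add {G : ℝ → ℝ}
    (hadd : ∀ p s, 0 ≤ p → 0 ≤ s → p + s ≤ 1 → G (p + s) = G p + G s) (h1 : G 1 = 0)
    {k M : ℕ} (hk : k ≤ M) : G (k / M) = 0 := by
  have h0 : G 0 = 0 := by simpa using hadd 0 0 le_rfl le_rfl (by norm_num)
  rcases M.eq_zero_or_pos with rfl | hM
  · simp [h0]
  have hmul : ∀ j ≤ M, G (j / M) = j * G (1 / M) := by
    intro j hj
    induction j with
    | zero => simp [h0]
    | succ j ih =>
      have hsplit : ((j + 1 : ℕ) : ℝ) / M = j / M + 1 / M := by push_cast; ring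
      have hle : (j : ℝ) / M + 1 / M ≤ 1 := by
        rw [← hsplit, div_le_one (by positivity)]; exact_mod_cast hj
      rw [hsplit, hadd _ _ (by positivity) (by positivity) hle, ih (by omega)]
      push_cast; ring
  have hunit : G (1 / M) = 0 := by
    have := hmul M le_rfl
    rw [div_self (by positivity), h1] at this
    exact (mul_eq_zero.mp this.symm).resolve_left (by positivity)
  rw [hmul k hk, hunit, mul_zero]

lemma exists_natCast_div {q : ℚ} (hq0 : 0 ≤ q) (hq1 : q ≤ 1) :
    ∃ a n : ℕ, a ≤ n ∧ (q : ℝ) = a / n := by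
  lift q to ℚ≥0 using hq0
  refine ⟨q.num, q.den, ?_, ?_⟩
  · have : (q : ℚ≥0) ≤ 1 := by exact_mod_cast hq1
    rw [← NNRat.num_div_den q, div_le_one (by positivity)] at this
    exact_mod_cast this
  · rw [Rat.cast_nnratCast, NNRat.cast_def]

/-- `(x, y)` stands for `x + ε y` in `ℝ[ε] / (ε² - γ ε)`. -/
def twistedMul (γ : ℝ) (A B : ℝ × ℝ) : ℝ × ℝ :=
  (A.1 * B.1, A.1 * B.2 + B.1 * A.2 + γ * A.2 * B.2)

lemma twistedMul_mul_mul_comm (γ : ℝ) (A B C D : ℝ × ℝ) :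
    twistedMul γ (twistedMul γ A B) (twistedMul γ C D) =
      twistedMul γ (twistedMul γ A C) (twistedMul γ B D) := by
  ext <;> simp only [twistedMul] <;> ring

lemma twistedMul_character (γ : ℝ) (A B : ℝ × ℝ) :
    (twistedMul γ A B).1 + γ * (twistedMul γ A B).2 = (A.1 + γ * A.2) * (B.1 + γ * B.2) := by
  simp only [twistedMul]; ring

lemma twistedMul_right_cancel {γ : ℝ} {A A' B : ℝ × ℝ} (hA : A.1 = A'.1)
    (hB : B.1 + γ * B.2 ≠ 0) (h : twistedMul γ A B = twistedMul γ A' B) : A = A' := by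
  have h2 := congrArg Prod.snd h
  simp only [twistedMul, hA] at h2
  have : (A.2 - A'.2) * (B.1 + γ * B.2) = 0 := by linear_combination h2
  exact Prod.ext hA (sub_eq_zero.mp ((mul_eq_zero.mp this).resolve_right hB))

lemma add_mul_ne_zero_of_strictConvexOn {f : ℝ → ℝ} {γ u : ℝ}
    (hconv : StrictConvexOn ℝ (Set.Ici 0) f) (hf0 : f 0 = 0) (hu : 0 < u)
    (hhalf : f (1 / 2 * u) = 1 / 2 * f u + u * f (1 / 2) + γ * f (1 / 2) * f u) :
    u + γ * f u ≠ 0 := by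
  intro hzero
  have hlt := hconv.2 (Set.mem_Ici.mpr le_rfl) (Set.mem_Ici.mpr hu.le) hu.ne
    (by norm_num : (0 : ℝ) < 1 / 2) (by norm_num : (0 : ℝ) < 1 / 2) (by norm_num)
  simp only [smul_eq_mul, mul_zero, zero_add, hf0] at hlt
  linarith [show f (1 / 2 * u) = 1 / 2 * f u by linear_combination hhalf + f (1 / 2) * hzero]

def IsPseudoAdditive (f : ℝ → ℝ) (γ : ℝ) : Prop :=
  ∀ p q : ℕ → ℝ, IsProbDist p → IsProbDist q →
    (∑' ij : ℕ × ℕ, f (p ij.1 * q ij.2)) =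
      (∑' i, f (p i)) + (∑' j, f (q j)) + γ * (∑' i, f (p i)) * (∑' j, f (q j))

def leibnizDefect (f : ℝ → ℝ) (γ u x : ℝ) : ℝ :=
  f (x * u) - (x * f u + u * f x + γ * f x * f u)

section

variable {f : ℝ → ℝ} {γ : ℝ}

lemma IsPseudoAdditive.sum_fin (h : IsPseudoAdditive f γ) (hf0 : f 0 = 0) {n m : ℕ}
    {v : Fin n → ℝ} {w : Fin m → ℝ} (hv : ∀ i, 0 ≤ v i) (hv1 : ∑ i, v i = 1)
    (hw : ∀ j, 0 ≤ w j) (hw1 : ∑ j, w j = 1) :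
    ∑ i, ∑ j, f (v i * w j) =
      ∑ i, f (v i) + ∑ j, f (w j) + γ * (∑ i, f (v i)) * ∑ j, f (w j) := by
  have := h _ _ (isProbDist_finDist hv hv1) (isProbDist_finDist hw hw1)
  rwa [tsum_comp_finDist_mul hf0, tsum_comp_finDist hf0, tsum_comp_finDist hf0] at this

lemma IsPseudoAdditive.sum_leibnizDefect_eq_zero (h : IsPseudoAdditive f γ) (hf0 : f 0 = 0)
    {N : ℕ} (hN : 0 < N) {n : ℕ} {v : Fin n → ℝ} (hv : ∀ i, 0 ≤ v i) (hv1 : ∑ i, v i = 1) :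
    ∑ i, leibnizDefect f γ (N : ℝ)⁻¹ (v i) = 0 := by
  have hN' : (N : ℝ) ≠ 0 := by positivity
  have key := h.sum_fin hf0 hv hv1 (w := fun _ : Fin N => (N : ℝ)⁻¹) (fun _ => by positivity)
    (by simp [hN'])
  simp only [sum_const, card_univ, Fintype.card_fin, nsmul_eq_mul, ← mul_sum] at key
  simp only [leibnizDefect, sum_sub_distrib, sum_add_distrib, ← sum_mul, ← mul_sum, hv1]
  rw [← mul_right_inj' hN', mul_zero]
  linear_combination key - (∑ i, f (v i)) * mul_inv_cancel₀ hN'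

lemma IsPseudoAdditive.leibnizDefect_add (h : IsPseudoAdditive f γ) (hf0 : f 0 = 0)
    {N : ℕ} (hN : 0 < N) {p s : ℝ} (hp : 0 ≤ p) (hs : 0 ≤ s) (hps : p + s ≤ 1) :
    leibnizDefect f γ (N : ℝ)⁻¹ (p + s) =
      leibnizDefect f γ (N : ℝ)⁻¹ p + leibnizDefect f γ (N : ℝ)⁻¹ s := by
  have h3 := h.sum_leibnizDefect_eq_zero hf0 hN (v := ![p, s, 1 - p - s])
    (by simp [Fin.forall_fin_succ, hp, hs]; linarith) (by simp [Fin.sum_univ_three])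
  have h2 := h.sum_leibnizDefect_eq_zero hf0 hN (v := ![p + s, 1 - p - s])
    (by simp [Fin.forall_fin_succ]; constructor <;> linarith) (by simp)
  simp only [Fin.sum_univ_three, Fin.sum_univ_two, Matrix.cons_val] at h3 h2
  linear_combination h2 - h3

lemma IsPseudoAdditive.leibnizDefect_one (h : IsPseudoAdditive f γ) (hf0 : f 0 = 0)
    {N : ℕ} (hN : 0 < N) : leibnizDefect f γ (N : ℝ)⁻¹ 1 = 0 := by
  simpa using h.sum_leibnizDefect_eq_zero hf0 hN (v := ![1]) (by simp) (by simp)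

lemma IsPseudoAdditive.twistedMul_inv_natCast (h : IsPseudoAdditive f γ) (hf0 : f 0 = 0)
    {k M N : ℕ} (hk : k ≤ M) (hN : 0 < N) :
    (k / M * (N : ℝ)⁻¹, f (k / M * (N : ℝ)⁻¹)) =
      twistedMul γ (k / M, f (k / M)) ((N : ℝ)⁻¹, f (N : ℝ)⁻¹) :=
  Prod.ext rfl <| sub_eq_zero.mp <| eq_zero_natCast_div_of_add (G := leibnizDefect f γ (N : ℝ)⁻¹)
    (fun _ _ => h.leibnizDefect_add hf0 hN) (h.leibnizDefect_one hf0 hN) hk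

lemma IsPseudoAdditive.twistedMul_natCast_div (h : IsPseudoAdditive f γ) (hf0 : f 0 = 0)
    (hconv : StrictConvexOn ℝ (Set.Ici 0) f) {a n b m : ℕ} (ha : 0 < a) (han : a ≤ n)
    (hb : 0 < b) (hbm : b ≤ m) :
    ((a / n * (b / m) : ℝ), f (a / n * (b / m))) =
      twistedMul γ ((a / n : ℝ), f (a / n)) ((b / m : ℝ), f (b / m)) := by
  set Φ : ℝ → ℝ × ℝ := fun x => (x, f x) with hΦ
  have hA : ∀ {k M N : ℕ}, k ≤ M → 0 < N →
      Φ (k / M * (N : ℝ)⁻¹) = twistedMul γ (Φ (k / M)) (Φ (N : ℝ)⁻¹) :=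
    h.twistedMul_inv_natCast hf0
  have hinv : ∀ {k M : ℕ}, 0 < k → k ≤ M →
      Φ (M : ℝ)⁻¹ = twistedMul γ (Φ (k / M)) (Φ (k : ℝ)⁻¹) := by
    intro k M hk hkM
    rw [← hA hkM hk]
    congr 1
    field_simp
  have hunit : ∀ {k : ℕ}, 0 < k → (Φ (k : ℝ)⁻¹).1 + γ * (Φ (k : ℝ)⁻¹).2 ≠ 0 := by
    intro k hk
    refine add_mul_ne_zero_of_strictConvexOn hconv hf0 (by positivity) ?_
    simpa [hΦ, twistedMul] using congrArg Prod.snd (hA (k := 1) (M := 2) (by norm_num) hk)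
  have hmulInv : ∀ {k N : ℕ}, 0 < k → 0 < N →
      Φ ((k * N : ℕ) : ℝ)⁻¹ = twistedMul γ (Φ (k : ℝ)⁻¹) (Φ (N : ℝ)⁻¹) := by
    intro k N hk hN
    have := hA (k := 1) (M := k) hk.nat_succ_le hN
    rwa [Nat.cast_one, one_div, ← mul_inv, ← Nat.cast_mul] at this
  have hn : 0 < n := ha.trans_le han
  have hm : 0 < m := hb.trans_le hbm
  have key : twistedMul γ (Φ (a / n * (b / m))) (twistedMul γ (Φ (a : ℝ)⁻¹) (Φ (b : ℝ)⁻¹)) =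
      twistedMul γ (twistedMul γ (Φ (a / n)) (Φ (b / m)))
        (twistedMul γ (Φ (a : ℝ)⁻¹) (Φ (b : ℝ)⁻¹)) := by
    calc _ = Φ ((n * m : ℕ) : ℝ)⁻¹ := by
          rw [← hmulInv ha hb, hinv (Nat.mul_pos ha hb) (Nat.mul_le_mul han hbm)]
          push_cast
          rw [div_mul_div_comm]
      _ = twistedMul γ (Φ (n : ℝ)⁻¹) (Φ (m : ℝ)⁻¹) := hmulInv hn hm
      _ = _ := by rw [hinv ha han, hinv hb hbm, twistedMul_mul_mul_comm]
  refine twistedMul_right_cancel rfl ?_ key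
  rw [twistedMul_character]
  exact mul_ne_zero (hunit ha) (hunit hb)

end

theorem stmt3 (f : ℝ → ℝ) (hf : IsEntropyGenerator f) (γ : ℝ)
    (h : ∀ p q : ℕ → ℝ, IsProbDist p → IsProbDist q →
      (∑' ij : ℕ × ℕ, f (p ij.1 * q ij.2)) =
        (∑' i, f (p i)) + (∑' j, f (q j))
          + γ * (∑' i, f (p i)) * (∑' j, f (q j))) :
    ∀ q r : ℚ, 0 ≤ q → q ≤ 1 → 0 ≤ r → r ≤ 1 →
      f ((q : ℝ) * (r : ℝ)) =
        (q : ℝ) * f (r : ℝ) + (r : ℝ) * f (q : ℝ) + γ * f (q : ℝ) * f (r : ℝ) := by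
  obtain ⟨-, hconv, hf0, -, -⟩ := hf
  intro q r hq0 hq1 hr0 hr1
  obtain ⟨a, n, han, hq⟩ := exists_natCast_div hq0 hq1
  obtain ⟨b, m, hbm, hr⟩ := exists_natCast_div hr0 hr1
  rw [hq, hr]
  rcases a.eq_zero_or_pos with rfl | ha
  · simp [hf0]
  rcases b.eq_zero_or_pos with rfl | hb
  · simp [hf0]
  exact congrArg Prod.snd (IsPseudoAdditive.twistedMul_natCast_div h hf0 hconv ha han hb hbm)
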